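/- arXiv:1204.6248 — 8 statements merged into one kernel-verified Lean document; each statement's English description precedes it below -/
import Mathlib

section
/- For all integers I ≥ 1 and S ≥ 1 such that I ≤ S or I + S is even, P(I,S) = Σ_{j=L}^{⌊I/2⌋} (∏_{k=0}^{I−j−1} 1/(I+S−1−2k)) · ((1/j!)·∏_{k=1}^{j} C(I−2(k−1),2)) · ((I−2j)! · C(S−1, I−1−2j)), where L = (I−S)/2 if I > S and L = 0 otherwise, and C(S−1, I−1−2j) is taken to be 0 when I−1−2j < 0. -/
/-- `P I S` is the probability that a fixed clean mobile gets infected in the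
Bluetooth malware model with `I` infected and `S` clean mobiles. -/
def P : ℕ → ℕ → ℚ
  | 0, _ => 0
  | _ + 1, 0 => 0
  | I + 1, S + 1 =>
      1 / ((I : ℚ) + S + 1) + ((S : ℚ) / ((I : ℚ) + S + 1)) * P I S +
        ((I : ℚ) / ((I : ℚ) + S + 1)) * P (I - 1) (S + 1)
  termination_by I _ => I

/-- Double factorial `n‼`; with natural subtraction as argument this also
implements the convention `(-1)‼ = 0‼ = 1`. -/
def dfact : ℕ → ℕ
  | 0 => 1
  | 1 => 1
  | n + 2 => (n + 2) * dfact n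

/-!
Under the hypothesis, `P I S = I / (I + S - 1)`: this fraction satisfies the defining
recursion, as an induction on `I` checks. Writing `I = a + 1` and `S = b + 1`, the `j`-th
summand of the closed form is `(a + 1) N_j / (a + b + 1)‼`, where `N_j` counts the pairings of
`a` red and `b` blue points with exactly `j` red–red pairs, so the sum is
`(a + 1) (a + b - 1)‼ / (a + b + 1)‼`. The counting identity `∑ N_j = (a + b - 1)‼` follows
from the recursion obtained by pairing the last red point with a blue point or with another
red point; for odd `a + b` it holds formally.
-/

open Nat Finset

lemma P_zero_left (S : ℕ) : P 0 S = 0 := by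
  simp [P]

lemma P_succ_succ (i s : ℕ) :
    P (i + 1) (s + 1) = (1 + s * P i s + i * P (i - 1) (s + 1)) / (i + s + 1) := by
  rw [P]
  field_simp

theorem P_eq_div (I S : ℕ) (hS : 1 ≤ S) (h : I ≤ S ∨ Even (I + S)) :
    P I S = I / (I + S - 1) := by
  simp only [Nat.even_iff] at h
  induction I using Nat.strong_induction_on generalizing S with
  | _ I ih =>
    obtain ⟨s, rfl⟩ : ∃ s, S = s + 1 := ⟨S - 1, by omega⟩
    match I with
    | 0 => simp [P_zero_left]
    | 1 =>
      rw [P_succ_succ, P_zero_left]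
      push_cast
      ring
    | i + 2 =>
      have hPis : s * P (i + 1) s = s * (i + 1) / (i + s) := by
        rcases Nat.eq_zero_or_pos s with rfl | hs
        · simp
        · rw [ih (i + 1) (by omega) s hs (by omega)]
          push_cast
          ring
      have hPi : P i (s + 1) = i / (i + s) := by
        rw [ih i (by omega) (s + 1) (by omega) (by omega)]
        push_cast
        ring
      have hden : (i : ℚ) + s ≠ 0 := by
        norm_cast
        omega
      rw [P_succ_succ, Nat.add_sub_cancel, hPis, hPi]
      push_cast
      rw [show (i : ℚ) + 2 + (s + 1) - 1 = i + s + 2 by ring]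
      field_simp
      ring

/-- For even `n`, the number of ways to split `n` points into pairs. -/
def pairings (n : ℕ) : ℕ := dfact (n - 1)

@[simp] lemma pairings_zero : pairings 0 = 1 := rfl

lemma pairings_add_two (n : ℕ) : pairings (n + 2) = (n + 1) * pairings n := by
  cases n <;> rfl

lemma pairings_pos : ∀ n, 0 < pairings n
  | 0 => Nat.one_pos
  | 1 => Nat.one_pos
  | n + 2 => by
    rw [pairings_add_two]
    exact Nat.mul_pos n.succ_pos (pairings_pos n)

lemma cast_pairings_add_two_mul (m r : ℕ) :
    (pairings (m + 2 * r) : ℚ) =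
      (∏ k ∈ range r, ((m : ℚ) + 2 * r - 1 - 2 * k)) * pairings m := by
  induction r with
  | zero => simp
  | succ r ih =>
    rw [show m + 2 * (r + 1) = m + 2 * r + 2 by ring, pairings_add_two, prod_range_succ']
    push_cast
    rw [ih]
    ring_nf

/-- The number of ways to choose `j` disjoint pairs among `a` points. -/
def matchingCount (a j : ℕ) : ℕ := a.choose (2 * j) * pairings (2 * j)

@[simp] lemma matchingCount_zero_right (a : ℕ) : matchingCount a 0 = 1 := by
  simp [matchingCount]

lemma matchingCount_eq_zero_of_lt {a j : ℕ} (h : a < 2 * j) : matchingCount a j = 0 := by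
  simp [matchingCount, Nat.choose_eq_zero_of_lt h]

lemma matchingCount_add_two_succ (a j : ℕ) :
    matchingCount (a + 2) (j + 1) =
      matchingCount (a + 1) (j + 1) + (a + 1) * matchingCount a j := by
  have hchoose := Nat.add_one_mul_choose_eq a (2 * j)
  simp only [matchingCount, show 2 * (j + 1) = 2 * j + 1 + 1 by ring, pairings_add_two,
    Nat.choose_succ_succ' (a + 1) (2 * j + 1)]
  rw [← mul_assoc (a + 1), hchoose]
  ring

lemma succ_mul_matchingCount_succ (n j : ℕ) :
    (j + 1) * matchingCount n (j + 1) = matchingCount n j * (n - 2 * j).choose 2 := by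
  have hchoose := Nat.choose_mul (n := n) (k := 2 * j + 2) (s := 2 * j) (by omega)
  have hpair : (2 * j + 2).choose 2 = (j + 1) * (2 * j + 1) := by
    rw [Nat.choose_two_right, show (2 * j + 2) * (2 * j + 2 - 1) = (j + 1) * (2 * j + 1) * 2 by
      rw [show 2 * j + 2 - 1 = 2 * j + 1 by omega]; ring]
    exact Nat.mul_div_cancel _ two_pos
  rw [show 2 * j + 2 - 2 * j = 2 by omega,
    Nat.choose_symm_of_eq_add (n := 2 * j + 2) (a := 2 * j) (b := 2) rfl, hpair] at hchoose
  simp only [matchingCount, show 2 * (j + 1) = 2 * j + 1 + 1 by ring, pairings_add_two]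
  linear_combination (pairings (2 * j)) * hchoose

lemma prod_choose_two (n j : ℕ) :
    ∏ k ∈ range j, (n - 2 * k).choose 2 = j ! * matchingCount n j := by
  induction j with
  | zero => simp
  | succ j ih =>
    rw [prod_range_succ, ih, factorial_succ, mul_assoc, ← succ_mul_matchingCount_succ]
    ring

lemma matchingCount_succ_mul_factorial {a j : ℕ} (h : 2 * j ≤ a) :
    matchingCount (a + 1) j * (a + 1 - 2 * j)! = (a + 1) * (matchingCount a j * (a - 2 * j)!) := by
  have hchoose := Nat.choose_mul_succ_eq a (2 * j)
  rw [show a + 1 - 2 * j = a - 2 * j + 1 by omega, factorial_succ] at *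
  simp only [matchingCount]
  linear_combination (pairings (2 * j) * (a - 2 * j)!) * hchoose.symm

/-- For even `a + b`, the number of ways to split `a` red and `b` blue points into pairs with
exactly `j` red–red pairs. -/
def bicolorPairings (a b j : ℕ) : ℕ :=
  matchingCount a j * (b.descFactorial (a - 2 * j) * pairings (b - (a - 2 * j)))

lemma bicolorPairings_eq_zero_of_lt {a b j : ℕ} (h : a < 2 * j) : bicolorPairings a b j = 0 := by
  simp [bicolorPairings, matchingCount_eq_zero_of_lt h]

lemma bicolorPairings_eq_zero_of_lt_sub {a b j : ℕ} (h : b < a - 2 * j) :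
    bicolorPairings a b j = 0 := by
  simp [bicolorPairings, Nat.descFactorial_eq_zero_iff_lt.mpr h]

lemma bicolorPairings_add_two_succ_zero (a b : ℕ) :
    bicolorPairings (a + 2) (b + 1) 0 = (b + 1) * bicolorPairings (a + 1) b 0 := by
  simp only [bicolorPairings, matchingCount_zero_right, Nat.mul_zero, Nat.sub_zero, one_mul,
    Nat.succ_descFactorial_succ, Nat.add_sub_add_right]
  ring

lemma bicolorPairings_add_two_succ_succ (a b j : ℕ) :
    bicolorPairings (a + 2) (b + 1) (j + 1) =
      (b + 1) * bicolorPairings (a + 1) b (j + 1) + (a + 1) * bicolorPairings a (b + 1) j := by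
  simp only [bicolorPairings, matchingCount_add_two_succ,
    show a + 2 - 2 * (j + 1) = a - 2 * j by omega]
  rcases le_or_gt a (2 * j) with h | h
  · rw [matchingCount_eq_zero_of_lt (by omega : a + 1 < 2 * (j + 1))]
    ring
  · obtain ⟨u, hu⟩ : ∃ u, a - 2 * j = u + 1 := ⟨a - 2 * j - 1, by omega⟩
    rw [hu, show a + 1 - 2 * (j + 1) = u by omega, Nat.succ_descFactorial_succ,
      Nat.add_sub_add_right]
    ring

lemma sum_bicolorPairings_add_two_succ (a b : ℕ) :
    ∑ j ∈ range (a + 3), bicolorPairings (a + 2) (b + 1) j =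
      (b + 1) * ∑ j ∈ range (a + 2), bicolorPairings (a + 1) b j +
        (a + 1) * ∑ j ∈ range (a + 1), bicolorPairings a (b + 1) j := by
  rw [sum_range_succ', sum_range_succ' (fun j => bicolorPairings (a + 1) b j)]
  simp only [bicolorPairings_add_two_succ_succ, bicolorPairings_add_two_succ_zero, sum_add_distrib,
    ← mul_sum]
  rw [sum_range_succ _ (a + 1), sum_range_succ (fun j => bicolorPairings a (b + 1) j) (a + 1),
    bicolorPairings_eq_zero_of_lt (by omega : a + 1 < 2 * (a + 1 + 1)),
    bicolorPairings_eq_zero_of_lt (by omega : a < 2 * (a + 1))]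
  ring

theorem sum_bicolorPairings (a b : ℕ) (h : a ≤ b ∨ Even (a + b)) :
    ∑ j ∈ range (a + 1), bicolorPairings a b j = pairings (a + b) := by
  simp only [Nat.even_iff] at h
  induction a using Nat.strong_induction_on generalizing b with
  | _ a ih =>
    match a, b with
    | 0, b => simp [bicolorPairings]
    | 1, 0 => omega
    | 1, b + 1 =>
      rw [show 1 + (b + 1) = b + 2 by ring, pairings_add_two]
      simp [sum_range_succ, bicolorPairings, matchingCount]
    | a + 2, 0 =>
      obtain ⟨c, rfl⟩ : ∃ c, a = 2 * c := ⟨a / 2, by omega⟩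
      rw [sum_eq_single (c + 1)]
      · simp [bicolorPairings, matchingCount, show 2 * c + 2 = 2 * (c + 1) by ring]
      · intro j _ hj
        rcases Nat.lt_or_gt_of_ne hj with hlt | hgt
        · exact bicolorPairings_eq_zero_of_lt_sub (by omega)
        · exact bicolorPairings_eq_zero_of_lt (by omega)
      · intro hc
        exact absurd (mem_range.mpr (by omega)) hc
    | a + 2, b + 1 =>
      rw [sum_bicolorPairings_add_two_succ, ih (a + 1) (by omega) b (by omega),
        ih a (by omega) (b + 1) (by omega), show a + 2 + (b + 1) = a + 1 + b + 2 by ring,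
        pairings_add_two, show a + (b + 1) = a + 1 + b by ring]
      ring

def closedFormTerm (I S j : ℕ) : ℚ :=
  (∏ k ∈ range (I - j), (1 / ((I : ℚ) + (S : ℚ) - 1 - 2 * (k : ℚ)))) *
    ((1 / (j ! : ℚ)) * ∏ k ∈ range j, ((I - 2 * k).choose 2 : ℚ)) *
    (((I - 2 * j) ! : ℚ) * (if 2 * j < I then ((S - 1).choose (I - 1 - 2 * j) : ℚ) else 0))

lemma closedFormTerm_eq {a b j : ℕ} (hj : 2 * j ≤ a + 1) (hab : a ≤ b + 2 * j) :
    closedFormTerm (a + 1) (b + 1) j =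
      (a + 1) * bicolorPairings a b j / pairings (a + b + 2) := by
  rcases hj.lt_or_eq with hj | hj
  swap
  · simp [closedFormTerm, hj, bicolorPairings_eq_zero_of_lt (by omega : a < 2 * j)]
  have hprod :
      ∏ k ∈ range (a + 1 - j), (1 / (((a + 1 : ℕ) : ℚ) + ((b + 1 : ℕ) : ℚ) - 1 - 2 * k))
        = pairings (b - (a - 2 * j)) / pairings (a + b + 2) := by
    have hpair := cast_pairings_add_two_mul (b - (a - 2 * j)) (a + 1 - j)
    have hsum : ((b - (a - 2 * j) : ℕ) : ℚ) + 2 * ((a + 1 - j : ℕ) : ℚ)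
        = ((a + 1 : ℕ) : ℚ) + ((b + 1 : ℕ) : ℚ) := by
      rw [Nat.cast_sub (by omega : a - 2 * j ≤ b), Nat.cast_sub (by omega : 2 * j ≤ a),
        Nat.cast_sub (by omega : j ≤ a + 1)]
      push_cast
      ring
    rw [show b - (a - 2 * j) + 2 * (a + 1 - j) = a + b + 2 by omega, hsum] at hpair
    rw [hpair, div_mul_cancel_right₀ (by exact_mod_cast (pairings_pos _).ne'),
      ← prod_inv_distrib]
    simp only [one_div]
  have hmatch : (1 / (j ! : ℚ)) * ∏ k ∈ range j, ((a + 1 - 2 * k).choose 2 : ℚ)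
      = matchingCount (a + 1) j := by
    rw [← Nat.cast_prod, prod_choose_two]
    push_cast
    field_simp
  have hfact : (matchingCount (a + 1) j : ℚ) * ((a + 1 - 2 * j)! : ℕ)
      = (a + 1) * (matchingCount a j * (a - 2 * j)!) := by
    exact_mod_cast matchingCount_succ_mul_factorial (by omega)
  rw [closedFormTerm, hprod, hmatch, if_pos hj, Nat.add_sub_cancel,
    show a + 1 - 1 - 2 * j = a - 2 * j by omega, bicolorPairings,
    Nat.descFactorial_eq_factorial_mul_choose]
  push_cast
  linear_combination
    (b.choose (a - 2 * j) * pairings (b - (a - 2 * j)) / pairings (a + b + 2) : ℚ) * hfact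

lemma sum_closedFormTerm {a b : ℕ} (h : a ≤ b ∨ Even (a + b)) :
    ∑ j ∈ Icc (if b + 1 < a + 1 then (a + 1 - (b + 1)) / 2 else 0) ((a + 1) / 2),
      closedFormTerm (a + 1) (b + 1) j = (a + 1) / (a + b + 1) := by
  have hmod := h
  simp only [Nat.even_iff] at hmod
  have hsub :
      Icc (if b + 1 < a + 1 then (a + 1 - (b + 1)) / 2 else 0) ((a + 1) / 2) ⊆ range (a + 1) := by
    intro j hj
    rw [mem_Icc] at hj
    rw [mem_range]
    omega
  rw [sum_congr rfl fun j hj => closedFormTerm_eq (by rw [mem_Icc] at hj; omega)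
      (by rw [mem_Icc] at hj; split_ifs at hj <;> omega),
    ← sum_div, ← mul_sum, ← Nat.cast_sum, sum_subset hsub, sum_bicolorPairings a b h,
    pairings_add_two]
  · have hpos := pairings_pos (a + b)
    push_cast
    field_simp
  · intro j hj hjL
    rw [mem_range] at hj
    rw [mem_Icc] at hjL
    rcases lt_or_ge a (2 * j) with hja | hja
    · exact bicolorPairings_eq_zero_of_lt hja
    · exact bicolorPairings_eq_zero_of_lt_sub
        (show b < a - 2 * j by split_ifs at hjL <;> omega)

open Nat in
/-- Closed form for `P I S` outside of the degenerate configuration. -/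
theorem stmt_1 (I S : ℕ) (hI : 1 ≤ I) (hS : 1 ≤ S) (h : I ≤ S ∨ Even (I + S)) :
    P I S =
      ∑ j ∈ Finset.Icc (if S < I then (I - S) / 2 else 0) (I / 2),
        (∏ k ∈ Finset.range (I - j), (1 / ((I : ℚ) + (S : ℚ) - 1 - 2 * (k : ℚ)))) *
          ((1 / (j ! : ℚ)) * ∏ k ∈ Finset.range j, ((I - 2 * k).choose 2 : ℚ)) *
          (((I - 2 * j) ! : ℚ) *
            (if 2 * j < I then ((S - 1).choose (I - 1 - 2 * j) : ℚ) else 0)) := by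
  obtain ⟨a, rfl⟩ : ∃ a, I = a + 1 := ⟨I - 1, by omega⟩
  obtain ⟨b, rfl⟩ : ∃ b, S = b + 1 := ⟨S - 1, by omega⟩
  have hab : a ≤ b ∨ Even (a + b) := by
    simp only [Nat.even_iff] at h ⊢
    omega
  rw [P_eq_div _ _ hS h]
  refine Eq.trans ?_ (sum_closedFormTerm hab).symm
  push_cast
  ring
end

section
/- For every integer x ≥ 1, P(2x, 2x) = Σ_{j=0}^{x−1} ((2j−1)!! · x! · (2x−1)!! · (2x−2j) · (2x−1)!) / ((4x−1)!! · j! · (x−j)! · (2x−2j−1)!! · (2j)!), as an identity in ℚ. -/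
/-!
For `I ≤ S` the recursion is solved by `P I S = I / (I + S - 1)`, so the left-hand side is
`2x / (4x - 1)`. Writing the double factorials through factorials and putting `m = x - j`, the
`j`-th summand becomes `wzScale x * wzTerm x m`, where `wzTerm x m = m 4^m C(x,m)^2 / C(2m,m)`.
Zeilberger's algorithm gives the recurrence `x²(2x+1)² W(x+1) = (x+1)²(16x²-1) W(x)` for
`W = wzSum`, the sum of `wzTerm x m` over `m`; it is certified by `wzCert`, a rational multiple
of the summand, through telescoping. Since `wzScale` satisfies a first-order recurrence as well,
`wzScale x * wzSum x = 2x / (4x - 1)` follows by induction from `x = 1`.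
-/

open Nat Finset

theorem P_eq_of_le {I S : ℕ} (h : I ≤ S) : P I S = I / (I + S - 1) := by
  induction I, S using P.induct with
  | case1 S => simp [P]
  | case2 I => omega
  | case3 I S ih ih' =>
    rw [P, ih (by omega), ih' (by omega)]
    rcases I with _ | I
    · simp
    · have hIS : (I : ℚ) + S ≠ 0 := by norm_cast; omega
      simp only [succ_eq_add_one, Nat.add_sub_cancel]
      push_cast
      rw [show (I : ℚ) + 1 + S - 1 = I + S by ring, show (I : ℚ) + (S + 1) - 1 = I + S by ring,
        show (I : ℚ) + 1 + 1 + (S + 1) - 1 = I + 1 + S + 1 by ring]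
      field_simp
      ring

theorem doubleFactorial_two_mul_mul_doubleFactorial_sub_one (n : ℕ) :
    (2 * n)‼ * (2 * n - 1)‼ = (2 * n)! := by
  rcases n with _ | n
  · rfl
  · rw [show 2 * (n + 1) - 1 = 2 * n + 1 by omega, show 2 * (n + 1) = 2 * n + 1 + 1 by omega,
      factorial_eq_mul_doubleFactorial]

theorem cast_doubleFactorial_two_mul_sub_one {K : Type*} [Field K] [CharZero K] (n : ℕ) :
    ((2 * n - 1)‼ : K) = (2 * n)! / (2 ^ n * n !) := by
  rw [eq_div_iff (by simp [factorial_ne_zero]),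
    ← doubleFactorial_two_mul_mul_doubleFactorial_sub_one, doubleFactorial_two_mul]
  push_cast
  ring

theorem dfact_eq_doubleFactorial (n : ℕ) : dfact n = n‼ := by
  induction n using Nat.twoStepInduction <;> simp_all [dfact]

def wzTerm (x m : ℕ) : ℚ := m * 4 ^ m * (x.choose m : ℚ) ^ 2 / m.centralBinom

def wzCert (x m : ℕ) : ℚ :=
  (m - 1) * (2 * (4 * x + 1) * m ^ 2 - (12 * x ^ 2 + 16 * x + 3) * m + (6 * x ^ 2 + 6 * x + 1)) *
    wzTerm (x + 1) m

theorem wzTerm_zero_right (x : ℕ) : wzTerm x 0 = 0 := by simp [wzTerm]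

theorem wzTerm_eq_zero_of_lt {x m : ℕ} (h : x < m) : wzTerm x m = 0 := by
  simp [wzTerm, choose_eq_zero_of_lt h]

theorem wzCert_succ_sub_wzCert (x m : ℕ) :
    wzCert x (m + 1) - wzCert x m =
      x ^ 2 * (2 * x + 1) ^ 2 * wzTerm (x + 1) m -
        (x + 1) ^ 2 * (16 * x ^ 2 - 1) * wzTerm x m := by
  rcases lt_or_ge (x + 1) m with h | h
  · simp only [wzCert, wzTerm_eq_zero_of_lt h, wzTerm_eq_zero_of_lt (h.trans m.lt_succ_self),
      wzTerm_eq_zero_of_lt ((x.lt_succ_self).trans h)]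
    ring
  have hx : (x.choose m : ℚ) = (x + 1).choose m * (x + 1 - m) / (x + 1) := by
    rw [eq_div_iff (by positivity)]
    exact_mod_cast choose_mul_succ_eq x m
  have hx' : ((x + 1).choose (m + 1) : ℚ) = (x + 1).choose m * (x + 1 - m) / (m + 1) := by
    rw [eq_div_iff (by positivity)]
    exact_mod_cast choose_succ_right_eq (x + 1) m
  have hc : ((m + 1).centralBinom : ℚ) = 2 * (2 * m + 1) * m.centralBinom / (m + 1) := by
    rw [eq_div_iff (by positivity)]
    exact_mod_cast (mul_comm _ _).trans (succ_mul_centralBinom_succ m)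
  have hpos : (m.centralBinom : ℚ) ≠ 0 := by exact_mod_cast (centralBinom_pos m).ne'
  simp only [wzCert, wzTerm, hx, hx', hc]
  field_simp
  push_cast
  ring

def wzSum (x : ℕ) : ℚ := ∑ m ∈ range (x + 1), wzTerm x m

theorem wzSum_succ (x : ℕ) :
    x ^ 2 * (2 * x + 1) ^ 2 * wzSum (x + 1) = (x + 1) ^ 2 * (16 * x ^ 2 - 1) * wzSum x := by
  have htel := sum_range_sub (wzCert x) (x + 2)
  have hbot : wzCert x 0 = 0 := by simp [wzCert, wzTerm_zero_right]
  have htop : wzCert x (x + 2) = 0 := by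
    simp [wzCert, wzTerm_eq_zero_of_lt (by omega : x + 1 < x + 2)]
  simp only [wzCert_succ_sub_wzCert, hbot, htop, sub_zero, sum_sub_distrib, ← mul_sum] at htel
  rw [wzSum, wzSum, sub_eq_zero.mp htel, sum_range_succ _ (x + 1),
    wzTerm_eq_zero_of_lt x.lt_succ_self, add_zero]

theorem sum_range_wzTerm_sub (x : ℕ) : ∑ j ∈ range x, wzTerm x (x - j) = wzSum x := by
  rw [wzSum, ← sum_range_reflect (wzTerm x) (x + 1), sum_range_succ]
  simp [wzTerm_zero_right]

def wzScale (x : ℕ) : ℚ :=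
  2 * ((2 * x)! : ℚ) ^ 2 * (2 * x - 1)! / ((4 * x)! * (x ! : ℚ) ^ 2)

theorem wzScale_succ {x : ℕ} (hx : x ≠ 0) :
    wzScale (x + 1) =
      wzScale x * (x * (2 * x + 1) ^ 2 / ((x + 1) * (4 * x + 1) * (4 * x + 3))) := by
  obtain ⟨y, rfl⟩ := exists_eq_succ_of_ne_zero hx
  rw [wzScale, wzScale, show 2 * (y + 1 + 1) - 1 = 2 * y + 1 + 1 + 1 by omega,
    show 2 * (y + 1) - 1 = 2 * y + 1 by omega,
    show 2 * (y + 1 + 1) = 2 * y + 1 + 1 + 1 + 1 by omega,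
    show 2 * (y + 1) = 2 * y + 1 + 1 by omega,
    show 4 * (y + 1 + 1) = 4 * y + 3 + 1 + 1 + 1 + 1 + 1 by omega,
    show 4 * (y + 1) = 4 * y + 3 + 1 by omega]
  simp only [factorial_succ]
  push_cast
  field_simp
  ring

theorem wzScale_mul_wzSum {x : ℕ} (hx : 1 ≤ x) : wzScale x * wzSum x = 2 * x / (4 * x - 1) := by
  induction x, hx using Nat.le_induction with
  | base =>
    norm_num [wzScale, wzSum, wzTerm, sum_range_succ, factorial, centralBinom_eq_two_mul_choose]
  | succ x hx ih =>
    have h4x : (4 * x - 1 : ℚ) ≠ 0 := by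
      have : (1 : ℚ) ≤ x := by exact_mod_cast hx
      linarith
    apply mul_left_cancel₀ (by positivity : (x : ℚ) ^ 2 * (2 * x + 1) ^ 2 ≠ 0)
    calc (x : ℚ) ^ 2 * (2 * x + 1) ^ 2 * (wzScale (x + 1) * wzSum (x + 1))
        = x * (2 * x + 1) ^ 2 / ((x + 1) * (4 * x + 1) * (4 * x + 3)) * wzScale x *
            (x ^ 2 * (2 * x + 1) ^ 2 * wzSum (x + 1)) := by
          rw [wzScale_succ (by omega)]; ring
      _ = x * (2 * x + 1) ^ 2 / ((x + 1) * (4 * x + 1) * (4 * x + 3)) * (x + 1) ^ 2 *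
            (4 * x + 1) * ((4 * x - 1) * (wzScale x * wzSum x)) := by
          rw [wzSum_succ]; ring
      _ = x ^ 2 * (2 * x + 1) ^ 2 * (2 * (x + 1 : ℕ) / (4 * (x + 1 : ℕ) - 1)) := by
          rw [ih, mul_div_cancel₀ _ h4x]
          push_cast
          rw [show 4 * ((x : ℚ) + 1) - 1 = 4 * x + 3 by ring]
          field_simp

theorem summand_eq_wzScale_mul_wzTerm {x j : ℕ} (hj : j ≤ x) :
    ((dfact (2 * j - 1) : ℚ) * (x ! : ℚ) * (dfact (2 * x - 1) : ℚ) *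
          ((2 * x - 2 * j : ℕ) : ℚ) * ((2 * x - 1) ! : ℚ)) /
        ((dfact (4 * x - 1) : ℚ) * (j ! : ℚ) * ((x - j) ! : ℚ) *
          (dfact (2 * x - 2 * j - 1) : ℚ) * ((2 * j) ! : ℚ)) =
      wzScale x * wzTerm x (x - j) := by
  obtain ⟨m, rfl⟩ := Nat.exists_eq_add_of_le hj
  rw [show j + m - j = m by omega, show 2 * (j + m) - 2 * j - 1 = 2 * m - 1 by omega,
    show 2 * (j + m) - 2 * j = 2 * m by omega,
    show 4 * (j + m) - 1 = 2 * (2 * (j + m)) - 1 by omega]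
  simp only [dfact_eq_doubleFactorial, cast_doubleFactorial_two_mul_sub_one, wzScale, wzTerm,
    centralBinom_eq_two_mul_choose]
  rw [cast_choose ℚ (by omega : m ≤ j + m), cast_choose ℚ (by omega : m ≤ 2 * m),
    show j + m - m = j by omega, show 2 * m - m = m by omega,
    show 4 * (j + m) = 2 * (2 * (j + m)) by ring,
    show (4 : ℚ) ^ m = 2 ^ (2 * m) by rw [pow_mul]; norm_num]
  push_cast
  field_simp
  ring

open Nat in
/-- Closed form for `P (2x) (2x)`. -/
theorem stmt_2 (x : ℕ) (hx : 1 ≤ x) :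
    P (2 * x) (2 * x) =
      ∑ j ∈ Finset.range x,
        ((dfact (2 * j - 1) : ℚ) * (x ! : ℚ) * (dfact (2 * x - 1) : ℚ) *
            ((2 * x - 2 * j : ℕ) : ℚ) * ((2 * x - 1) ! : ℚ)) /
          ((dfact (4 * x - 1) : ℚ) * (j ! : ℚ) * ((x - j) ! : ℚ) *
            (dfact (2 * x - 2 * j - 1) : ℚ) * ((2 * j) ! : ℚ)) := by
  rw [P_eq_of_le le_rfl,
    sum_congr rfl fun j hj => summand_eq_wzScale_mul_wzTerm (mem_range.mp hj).le, ← mul_sum,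
    sum_range_wzTerm_sub, wzScale_mul_wzSum hx]
  push_cast
  ring
end

section
/- For every integer x ≥ 1, Σ_{j=0}^{x−1} ((2j−1)!! · x! · (2x−1)!! · (2x−1)! · (4j−2x+3)) / ((4x−3)!! · (j+1)! · (x−j−1)! · (2x−2j−1)!! · (2j)!) = 1, as an identity in ℚ (note that the integer factor 4j−2x+3 may be negative). -/
theorem dfact_pos : ∀ n, 0 < dfact n
  | 0 => Nat.one_pos
  | 1 => Nat.one_pos
  | n + 2 => Nat.mul_pos (by omega) (dfact_pos n)

theorem dfact_add_two (n : ℕ) : dfact (n + 2) = (n + 2) * dfact n := rfl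

theorem dfact_two_mul_add_one (k : ℕ) : dfact (2 * k + 1) = (2 * k + 1) * dfact (2 * k - 1) := by
  cases k with
  | zero => rfl
  | succ k =>
    rw [show 2 * (k + 1) + 1 = 2 * k + 1 + 2 by ring, show 2 * (k + 1) - 1 = 2 * k + 1 by omega]
    rfl

theorem Finset.sum_range_succ_eq_of_telescoping {M : Type*} [AddCommGroup M] {f g G : ℕ → M}
    {n : ℕ} (hstep : ∀ j < n, f j - g j = G (j + 1) - G j) (hG : G 0 = 0)
    (hlast : f n + G n = 0) :
    ∑ j ∈ range (n + 1), f j = ∑ j ∈ range n, g j := by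
  have hsum : ∑ j ∈ range n, (f j - g j) = G n := by
    rw [sum_congr rfl fun j hj => hstep j (mem_range.1 hj), sum_range_sub, hG, sub_zero]
  rw [sum_range_succ, ← sub_eq_zero, ← hlast, ← hsum, sum_sub_distrib]
  abel

namespace OddFactorialSum

open Nat

def summand (x j : ℕ) : ℚ :=
  ((dfact (2 * j - 1) : ℚ) * (x ! : ℚ) * (dfact (2 * x - 1) : ℚ) *
      ((2 * x - 1) ! : ℚ) * (4 * (j : ℚ) - 2 * (x : ℚ) + 3)) /
    ((dfact (4 * x - 3) : ℚ) * ((j + 1) ! : ℚ) * ((x - j - 1) ! : ℚ) *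
      (dfact (2 * x - 2 * j - 1) : ℚ) * ((2 * j) ! : ℚ))

def prefactor (x : ℕ) : ℚ :=
  (x ! * dfact (2 * x - 1) * (2 * x - 1) ! : ℚ) / dfact (4 * x - 3)

def hyperTerm (x j : ℕ) : ℚ :=
  (dfact (2 * j - 1) : ℚ) / ((j + 1) ! * (x - j) ! * dfact (2 * x - 2 * j + 1) * (2 * j) !)

def prefactorRatio (x : ℚ) : ℚ :=
  (x + 1) * (2 * x + 1) ^ 2 * (2 * x) / ((4 * x + 1) * (4 * x - 1))

-- Gosper's algorithm applied to `F(x+1, j) - F(x, j)` produces this certificate.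
def certificate (x j : ℚ) : ℚ :=
  -2 * j * (j + 1) * (1 + 2 * j - 8 * j ^ 2 + 4 * x + 28 * x * j - 32 * x * j ^ 2
    + 64 * x ^ 2 * j - 8 * x ^ 2 - 24 * x ^ 3) / ((4 * x + 1) * (4 * x - 1))

def mate (x j : ℕ) : ℚ :=
  certificate x j * prefactor x * hyperTerm x j

theorem four_mul_sub_one_ne_zero (x : ℕ) : 4 * (x : ℚ) - 1 ≠ 0 := by
  intro h
  have : (4 * x : ℤ) = 1 := by exact_mod_cast sub_eq_zero.1 h
  omega

theorem certificate_spec (x j : ℕ) :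
    (4 * j - 2 * x + 1) * prefactorRatio x - (x - j) * (2 * x - 2 * j + 1) * (4 * j - 2 * x + 3) =
      certificate x (j + 1) * ((x - j) * (2 * x - 2 * j + 1) / ((j + 2) * (2 * j + 2))) -
        certificate x j := by
  have := four_mul_sub_one_ne_zero x
  unfold prefactorRatio certificate
  field_simp
  ring

theorem certificate_diag (x : ℕ) : (2 * x + 1) * prefactorRatio x + certificate x x = 0 := by
  have := four_mul_sub_one_ne_zero x
  unfold prefactorRatio certificate
  field_simp
  ring

theorem summand_eq {x j : ℕ} (hj : j < x) :
    summand x j =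
      (x - j) * (2 * x - 2 * j + 1) * (4 * j - 2 * x + 3) * prefactor x * hyperTerm x j := by
  obtain ⟨m, rfl⟩ := Nat.exists_eq_add_of_lt hj
  have hm2 : j + m + 1 - j = m + 1 := by omega
  have hm3 : 2 * (j + m + 1) - 2 * j - 1 = 2 * m + 1 := by omega
  have hm4 : 2 * (j + m + 1) - 2 * j + 1 = 2 * (m + 1) + 1 := by omega
  simp only [summand, prefactor, hyperTerm, hm2, hm3, hm4, dfact_two_mul_add_one (m + 1),
    factorial_succ m]
  rw [show 2 * (m + 1) - 1 = 2 * m + 1 by omega]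
  have := dfact_pos (2 * m + 1)
  have := factorial_pos m
  push_cast
  field_simp
  ring

theorem prefactor_succ {x : ℕ} (hx : 1 ≤ x) :
    prefactor (x + 1) = prefactorRatio x * prefactor x := by
  obtain ⟨n, rfl⟩ := Nat.exists_eq_add_of_le' hx
  have h2 : 2 * (n + 1 + 1) - 1 = 2 * n + 1 + 2 := by omega
  have h2' : 2 * (n + 1) - 1 = 2 * n + 1 := by omega
  have h4 : 4 * (n + 1 + 1) - 3 = 4 * n + 1 + 2 + 2 := by omega
  have h4' : 4 * (n + 1) - 3 = 4 * n + 1 := by omega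
  rw [prefactorRatio, prefactor, prefactor, h2, h2', h4, h4', dfact_add_two, dfact_add_two,
    dfact_add_two, factorial_succ (n + 1), factorial_succ (2 * n + 1 + 1),
    factorial_succ (2 * n + 1)]
  have := dfact_pos (2 * n + 1)
  have := dfact_pos (4 * n + 1)
  have := factorial_pos (2 * n + 1)
  push_cast
  rw [show 4 * ((n : ℚ) + 1) - 1 = 4 * n + 3 by ring]
  field_simp
  ring

theorem hyperTerm_succ_left {x j : ℕ} (hj : j ≤ x) :
    hyperTerm (x + 1) j = hyperTerm x j / ((x - j + 1) * (2 * x - 2 * j + 3)) := by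
  obtain ⟨m, rfl⟩ := Nat.exists_eq_add_of_le hj
  have h1 : j + m + 1 - j = m + 1 := by omega
  have h1' : j + m - j = m := by omega
  have h2 : 2 * (j + m + 1) - 2 * j + 1 = 2 * m + 1 + 2 := by omega
  have h2' : 2 * (j + m) - 2 * j + 1 = 2 * m + 1 := by omega
  rw [hyperTerm, hyperTerm, h1, h1', h2, h2', dfact_add_two, factorial_succ m]
  have := dfact_pos (2 * m + 1)
  have := factorial_pos m
  push_cast
  rw [show (j + m : ℚ) - j + 1 = m + 1 by ring,
    show 2 * ((j : ℚ) + m) - 2 * j + 3 = 2 * m + 3 by ring]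
  field_simp
  ring

theorem hyperTerm_succ_right {x j : ℕ} (hj : j < x) :
    hyperTerm x (j + 1) =
      (x - j) * (2 * x - 2 * j + 1) / ((j + 2) * (2 * j + 2)) * hyperTerm x j := by
  obtain ⟨m, rfl⟩ := Nat.exists_eq_add_of_lt hj
  have h1 : j + m + 1 - (j + 1) = m := by omega
  have h1' : j + m + 1 - j = m + 1 := by omega
  have h2 : 2 * (j + m + 1) - 2 * (j + 1) + 1 = 2 * m + 1 := by omega
  have h2' : 2 * (j + m + 1) - 2 * j + 1 = 2 * m + 1 + 2 := by omega
  have h3 : 2 * (j + 1) - 1 = 2 * j + 1 := by omega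
  have h3' : 2 * (j + 1) = 2 * j + 1 + 1 := by omega
  rw [hyperTerm, hyperTerm, h1, h1', h2, h2', h3, h3', dfact_add_two, dfact_two_mul_add_one j,
    factorial_succ (j + 1), factorial_succ m, factorial_succ (2 * j + 1), factorial_succ (2 * j)]
  have := dfact_pos (2 * m + 1)
  have := dfact_pos (2 * j - 1)
  have := factorial_pos m
  have := factorial_pos (j + 1)
  have := factorial_pos (2 * j)
  push_cast
  field_simp
  ring

theorem summand_succ_eq {x j : ℕ} (hx : 1 ≤ x) (hj : j ≤ x) :
    summand (x + 1) j = (4 * j - 2 * x + 1) * prefactorRatio x * prefactor x * hyperTerm x j := by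
  have hd : ((x : ℚ) - j + 1) * (2 * x - 2 * j + 3) ≠ 0 := by
    have : (j : ℚ) ≤ x := by exact_mod_cast hj
    apply mul_ne_zero <;> linarith
  rw [summand_eq (Nat.lt_succ_of_le hj), prefactor_succ hx, hyperTerm_succ_left hj]
  rw [← mul_div_cancel_right₀
    ((4 * j - 2 * x + 1) * prefactorRatio x * prefactor x * hyperTerm x j) hd]
  push_cast
  ring

theorem summand_sub_summand_eq {x j : ℕ} (hx : 1 ≤ x) (hj : j < x) :
    summand (x + 1) j - summand x j = mate x (j + 1) - mate x j := by
  rw [summand_succ_eq hx hj.le, summand_eq hj, mate, mate, hyperTerm_succ_right hj]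
  push_cast
  linear_combination prefactor x * hyperTerm x j * certificate_spec x j

theorem summand_succ_diag_add_mate (x : ℕ) (hx : 1 ≤ x) : summand (x + 1) x + mate x x = 0 := by
  rw [summand_succ_eq hx le_rfl, mate]
  linear_combination prefactor x * hyperTerm x x * certificate_diag x

end OddFactorialSum

open Nat in
theorem stmt_6 (x : ℕ) (hx : 1 ≤ x) :
    ∑ j ∈ Finset.range x,
      ((dfact (2 * j - 1) : ℚ) * (x ! : ℚ) * (dfact (2 * x - 1) : ℚ) *
          ((2 * x - 1) ! : ℚ) * (4 * (j : ℚ) - 2 * (x : ℚ) + 3)) /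
        ((dfact (4 * x - 3) : ℚ) * ((j + 1) ! : ℚ) * ((x - j - 1) ! : ℚ) *
          (dfact (2 * x - 2 * j - 1) : ℚ) * ((2 * j) ! : ℚ)) = 1 := by
  open OddFactorialSum in
  change ∑ j ∈ Finset.range x, summand x j = 1
  induction x, hx using Nat.le_induction with
  | base => norm_num [summand, dfact]
  | succ x hx ih =>
    rw [Finset.sum_range_succ_eq_of_telescoping (fun j hj => summand_sub_summand_eq hx hj)
      (by simp [mate, certificate]) (summand_succ_diag_add_mate x hx), ih]
end

section
/- For every integer x ≥ 1, (2^{2x−1} · ((2x−1)!)² · (2x)! / (4x−2)!) · Σ_{j=0}^{x−1} ((x−j)·(4j−2x+3)) / (4^j · (j+1) · (j!)² · (2(x−j))!) = 1, as an identity in ℚ (note that the integer factor 4j−2x+3 may be negative). -/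
/-!
Zeilberger's creative telescoping. The summand `t x j` satisfies
`t (x + 1) j = r x * t x j + G x (j + 1) - G x j` for `j < x`, where `r x` is the ratio
`prefactor x / prefactor (x + 1)` and the rational certificate `G` comes from Gosper's algorithm.
Summing over `j < x + 1`, the telescoped differences are cancelled by the boundary term
`t (x + 1) x = -G x x`, so the sums `S x` satisfy `S (x + 1) = r x * S x`; hence
`prefactor x * S x` is constant, and it equals `1` at `x = 1`.
-/

open Nat Finset

theorem Finset.sum_range_succ_eq_mul_of_telescoping {R : Type*} [CommRing R] {a b g : ℕ → R}
    {r : R} {x : ℕ} (hstep : ∀ j < x, a j = r * b j + (g (j + 1) - g j)) (hlast : a x = -g x)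
    (hg0 : g 0 = 0) :
    ∑ j ∈ range (x + 1), a j = r * ∑ j ∈ range x, b j := by
  rw [sum_range_succ, sum_congr rfl fun j hj => hstep j (mem_range.mp hj), sum_add_distrib,
    ← mul_sum, sum_range_sub, hlast, hg0]
  ring

namespace CreativeTelescoping

def summand (x j : ℕ) : ℚ :=
  ((x : ℚ) - j) * (4 * j - 2 * x + 3) / (4 ^ j * (j + 1) * (j ! : ℚ) ^ 2 * ((2 * (x - j)) ! : ℚ))

def prefactor (x : ℕ) : ℚ :=
  2 ^ (2 * x - 1) * ((2 * x - 1) ! : ℚ) ^ 2 * ((2 * x) ! : ℚ) / ((4 * x - 2) ! : ℚ)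

def ratio (x : ℕ) : ℚ :=
  (4 * x - 1) * (4 * x + 1) / (2 * x * (2 * x + 1) ^ 2 * (2 * x + 2))

def certificate (x j : ℕ) : ℚ :=
  2 * j * (8 * (4 * x + 1) * j ^ 2 - (64 * x ^ 2 + 28 * x + 2) * j +
      (2 * x + 1) * (12 * x ^ 2 - 2 * x - 1)) /
    (2 * x * (2 * x + 1) ^ 2 * (2 * x + 2) * 4 ^ j * (j ! : ℚ) ^ 2 * ((2 * (x - j) + 1) ! : ℚ))

theorem summand_succ {x j : ℕ} (hj : j < x) :
    summand (x + 1) j = ratio x * summand x j + (certificate x (j + 1) - certificate x j) := by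
  obtain ⟨m, rfl⟩ : ∃ m, x = j + m + 1 := ⟨x - j - 1, by omega⟩
  simp only [summand, ratio, certificate, show j + m + 1 + 1 - j = m + 1 + 1 by omega,
    show j + m + 1 - j = m + 1 by omega, show j + m + 1 - (j + 1) = m by omega, mul_add,
    Nat.factorial_succ]
  push_cast
  field_simp
  ring

theorem summand_succ_self {x : ℕ} (hx : 1 ≤ x) : summand (x + 1) x = -certificate x x := by
  obtain ⟨n, rfl⟩ : ∃ n, x = n + 1 := ⟨x - 1, by omega⟩
  simp only [summand, certificate, Nat.add_sub_cancel_left, Nat.sub_self, Nat.factorial]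
  push_cast
  field_simp
  ring

theorem prefactor_succ_mul_ratio {x : ℕ} (hx : 1 ≤ x) :
    prefactor (x + 1) * ratio x = prefactor x := by
  obtain ⟨n, rfl⟩ : ∃ n, x = n + 1 := ⟨x - 1, by omega⟩
  rw [prefactor, prefactor, show 2 * (n + 1 + 1) - 1 = 2 * n + 1 + 1 + 1 by omega,
    show 2 * (n + 1) - 1 = 2 * n + 1 by omega,
    show 4 * (n + 1 + 1) - 2 = 4 * n + 2 + 1 + 1 + 1 + 1 by omega,
    show 4 * (n + 1) - 2 = 4 * n + 2 by omega, show 2 * (n + 1 + 1) = 2 * n + 1 + 1 + 1 + 1 by omega,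
    show 2 * (n + 1) = 2 * n + 1 + 1 by omega]
  simp only [ratio, Nat.factorial_succ, pow_succ]
  push_cast
  field_simp
  ring

theorem prefactor_mul_sum_summand {x : ℕ} (hx : 1 ≤ x) :
    prefactor x * ∑ j ∈ range x, summand x j = 1 := by
  induction x, hx using Nat.le_induction with
  | base => norm_num [prefactor, summand]
  | succ x hx ih =>
    rw [sum_range_succ_eq_mul_of_telescoping (fun j hj => summand_succ hj) (summand_succ_self hx)
      (by simp [certificate]), ← mul_assoc, prefactor_succ_mul_ratio hx, ih]

end CreativeTelescoping

open Nat in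
theorem stmt_7 (x : ℕ) (hx : 1 ≤ x) :
    ((2 : ℚ) ^ (2 * x - 1) * (((2 * x - 1) ! : ℚ)) ^ 2 * ((2 * x) ! : ℚ) /
        ((4 * x - 2) ! : ℚ)) *
      ∑ j ∈ Finset.range x,
        (((x : ℚ) - (j : ℚ)) * (4 * (j : ℚ) - 2 * (x : ℚ) + 3)) /
          ((4 : ℚ) ^ j * ((j : ℚ) + 1) * ((j ! : ℚ)) ^ 2 * ((2 * (x - j)) ! : ℚ)) = 1 :=
  CreativeTelescoping.prefactor_mul_sum_summand hx
end

section
/- For every odd integer n ≥ 1, (2n)! / (2^n · (n!)² · (n+1)!) = Σ_{z=0}^{(n−1)/2} (4z − n + 2) / (2^{2z+1} · (z+1) · (z!)² · (n−2z)!), as an identity in ℚ (note that the integer factor 4z − n + 2 may be negative). -/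
/-! After multiplying by `2 ^ (n + 1) * n !`, the `z`-th summand becomes
`C(n, 2z) 2^(n-2z) ((2 - n) C(2z, z) + (n + 2) C(2z, z + 1))`. Comparing coefficients of
`X ^ (n + 2c)` in `(X + 1) ^ (2n) = ((X² + 1) + 2X) ^ n` gives
`∑ z, C(n, 2z) C(2z, z + c) 2^(n-2z) = C(2n, n + 2c)`, so the sum is
`(2 - n) C(2n, n) + (n + 2) C(2n, n + 2) = 2 C(2n, n) / (n + 1)`. -/

open Finset Nat Polynomial

theorem coeff_expand_X_add_one_pow_mul_two_X_pow (n j c : ℕ) (hj : j ≤ n) :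
    ((expand ℕ 2 (X + 1)) ^ j * (C 2 * X) ^ (n - j) * (n.choose j : ℕ[X])).coeff (n + 2 * c)
      = if 2 ∣ j then n.choose j * j.choose (j / 2 + c) * 2 ^ (n - j) else 0 := by
  have hpoly : (expand ℕ 2 (X + 1)) ^ j * (C 2 * X) ^ (n - j) * (n.choose j : ℕ[X])
      = expand ℕ 2 ((X + 1) ^ j) * X ^ (n - j) * C (n.choose j * 2 ^ (n - j)) := by
    rw [map_pow, mul_pow, ← C_pow, C_mul, ← C_eq_natCast, Nat.cast_id]; ring
  have hdvd : 2 ∣ j + 2 * c ↔ 2 ∣ j := by simp [Nat.dvd_add_left]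
  rw [hpoly, coeff_mul_C, coeff_mul_X_pow', if_pos (by omega), coeff_expand two_pos,
    coeff_X_add_one_pow, Nat.cast_id, show n + 2 * c - (n - j) = j + 2 * c by omega]
  simp only [hdvd]
  split_ifs
  · rw [show (j + 2 * c) / 2 = j / 2 + c by omega]; ring
  · simp

theorem sum_range_succ_ite_two_dvd {M : Type*} [AddCommMonoid M] (n : ℕ) (f : ℕ → M) :
    ∑ j ∈ range (n + 1), (if 2 ∣ j then f j else 0)
      = ∑ z ∈ range (n / 2 + 1), f (2 * z) := by
  rw [← sum_filter]
  have himage : (range (n + 1)).filter (2 ∣ ·) = (range (n / 2 + 1)).image (2 * ·) := by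
    ext j
    simp only [mem_filter, mem_range, mem_image]
    constructor
    · rintro ⟨hj, k, rfl⟩
      exact ⟨k, by omega, rfl⟩
    · rintro ⟨k, hk, rfl⟩
      exact ⟨by omega, dvd_mul_right 2 k⟩
  rw [himage, sum_image fun a _ b _ h => by simpa using h]

theorem sum_choose_two_mul_mul_choose_mul_two_pow (n c : ℕ) :
    ∑ z ∈ range (n / 2 + 1), n.choose (2 * z) * (2 * z).choose (z + c) * 2 ^ (n - 2 * z)
      = (2 * n).choose (n + 2 * c) := by
  have hsq : ((X + 1 : ℕ[X]) ^ 2) = expand ℕ 2 (X + 1) + C 2 * X := by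
    simp only [map_add, expand_X, map_one]; rw [C_ofNat]; ring
  have hcoeff := congrArg (coeff · (n + 2 * c)) (congrArg (· ^ n) hsq)
  rw [← pow_mul, coeff_X_add_one_pow, Nat.cast_id, add_pow, finsetSum_coeff] at hcoeff
  rw [hcoeff, sum_congr rfl fun j hj =>
      coeff_expand_X_add_one_pow_mul_two_X_pow n j c (mem_range_succ_iff.mp hj),
    sum_range_succ_ite_two_dvd n (fun j => n.choose j * j.choose (j / 2 + c) * 2 ^ (n - j))]
  simp only [Nat.mul_div_cancel_left _ two_pos]

theorem cast_choose_two_mul_succ_mul (z : ℕ) :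
    ((2 * z).choose (z + 1) : ℚ) * (z + 1) = (2 * z).choose z * z := by
  have h := choose_succ_right_eq (2 * z) z
  rw [show 2 * z - z = z by omega] at h
  exact_mod_cast h

theorem cast_choose_two_mul_add_two_mul (n : ℕ) :
    ((2 * n).choose (n + 2) : ℚ) * ((n + 1) * (n + 2)) = (2 * n).choose n * (n * (n - 1)) := by
  rcases n with _ | n
  · simp
  have h₁ := choose_succ_right_eq (2 * (n + 1)) (n + 1)
  have h₂ := choose_succ_right_eq (2 * (n + 1)) (n + 1 + 1)
  rw [show 2 * (n + 1) - (n + 1) = n + 1 by omega] at h₁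
  rw [show 2 * (n + 1) - (n + 1 + 1) = n by omega] at h₂
  have q₁ : ((2 * (n + 1)).choose (n + 1 + 1) : ℚ) * (n + 1 + 1)
      = (2 * (n + 1)).choose (n + 1) * (n + 1) := by exact_mod_cast h₁
  have q₂ : ((2 * (n + 1)).choose (n + 1 + 2) : ℚ) * (n + 1 + 2)
      = (2 * (n + 1)).choose (n + 1 + 1) * n := by exact_mod_cast h₂
  push_cast
  linear_combination (n + 1 + 1 : ℚ) * q₂ + n * q₁

theorem four_mul_sub_add_two_mul_choose (n z : ℕ) :
    (4 * z - n + 2 : ℚ) * (2 * z).choose z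
      = (z + 1) * ((2 - n) * (2 * z).choose z + (n + 2) * (2 * z).choose (z + 1)) := by
  linear_combination (-(n : ℚ) - 2) * cast_choose_two_mul_succ_mul z

theorem cast_choose_mul_choose_mul_factorial {n z : ℕ} (hz : 2 * z ≤ n) :
    (n.choose (2 * z) * (2 * z).choose z : ℚ) * (z ! ^ 2 * (n - 2 * z)!) = n ! := by
  have h₁ := choose_mul_factorial_mul_factorial hz
  have h₂ := choose_mul_factorial_mul_factorial (show z ≤ 2 * z by omega)
  rw [show 2 * z - z = z by omega] at h₂
  rw [← h₁, ← h₂]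
  push_cast
  ring

theorem four_mul_sub_add_two_div_eq {n z : ℕ} (hz : 2 * z ≤ n) :
    (4 * (z : ℚ) - n + 2)
        / (2 ^ (2 * z + 1) * ((z : ℚ) + 1) * (z ! : ℚ) ^ 2 * ((n - 2 * z)! : ℚ))
      = (n.choose (2 * z) * 2 ^ (n - 2 * z)
          * ((2 - n) * (2 * z).choose z + (n + 2) * (2 * z).choose (z + 1)))
        / (2 ^ (n + 1) * n !) := by
  have hfac := cast_choose_mul_choose_mul_factorial hz
  have hcoef := four_mul_sub_add_two_mul_choose n z
  obtain ⟨k, rfl⟩ := Nat.exists_eq_add_of_le hz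
  rw [Nat.add_sub_cancel_left] at hfac ⊢
  rw [div_eq_div_iff (by positivity) (by positivity)]
  linear_combination (-(4 * z - ((2 * z + k : ℕ) : ℚ) + 2) * 2 ^ (2 * z + k + 1)) * hfac
    + (((2 * z + k).choose (2 * z) : ℚ) * 2 ^ (2 * z + k + 1) * (z ! : ℚ) ^ 2 * (k ! : ℚ))
      * hcoef

theorem sum_four_mul_sub_add_two_div (n : ℕ) :
    ∑ z ∈ range (n / 2 + 1),
        (4 * (z : ℚ) - n + 2)
          / (2 ^ (2 * z + 1) * ((z : ℚ) + 1) * (z ! : ℚ) ^ 2 * ((n - 2 * z)! : ℚ))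
      = ((2 - n : ℚ) * (2 * n).choose n + (n + 2) * (2 * n).choose (n + 2))
        / (2 ^ (n + 1) * n !) := by
  have hsum (c : ℕ) : ∑ z ∈ range (n / 2 + 1),
      (n.choose (2 * z) * (2 * z).choose (z + c) * 2 ^ (n - 2 * z) : ℚ)
        = (2 * n).choose (n + 2 * c) := by
    exact_mod_cast sum_choose_two_mul_mul_choose_mul_two_pow n c
  have h₀ := hsum 0
  have h₁ := hsum 1
  simp only [add_zero, mul_zero] at h₀
  rw [mul_one] at h₁
  rw [sum_congr rfl fun z hz =>
      four_mul_sub_add_two_div_eq (n := n) (by have := mem_range.mp hz; omega),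
    ← sum_div, ← h₀, ← h₁, mul_sum, mul_sum, ← sum_add_distrib]
  exact congrArg (· / _) (sum_congr rfl fun _ _ => by ring)

open Nat in
theorem stmt_8_general (n : ℕ) (hodd : Odd n) :
    ((2 * n) ! : ℚ) / ((2 : ℚ) ^ n * ((n ! : ℚ)) ^ 2 * ((n + 1) ! : ℚ)) =
      ∑ z ∈ Finset.range ((n - 1) / 2 + 1),
        (4 * (z : ℚ) - (n : ℚ) + 2) /
          ((2 : ℚ) ^ (2 * z + 1) * ((z : ℚ) + 1) * ((z ! : ℚ)) ^ 2 * ((n - 2 * z) ! : ℚ)) := by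
  rw [show (n - 1) / 2 = n / 2 by obtain ⟨m, rfl⟩ := hodd; omega, sum_four_mul_sub_add_two_div]
  have hfac := choose_mul_factorial_mul_factorial (show n ≤ 2 * n by omega)
  rw [show 2 * n - n = n by omega] at hfac
  rw [← hfac, factorial_succ, div_eq_div_iff (by positivity) (by positivity)]
  push_cast
  linear_combination (-(n ! : ℚ) ^ 3 * 2 ^ n) * cast_choose_two_mul_add_two_mul n

open Nat in
theorem stmt_8 (n : ℕ) (hn : 1 ≤ n) (hodd : Odd n) :
    ((2 * n) ! : ℚ) / ((2 : ℚ) ^ n * ((n ! : ℚ)) ^ 2 * ((n + 1) ! : ℚ)) =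
      ∑ z ∈ Finset.range ((n - 1) / 2 + 1),
        (4 * (z : ℚ) - (n : ℚ) + 2) /
          ((2 : ℚ) ^ (2 * z + 1) * ((z : ℚ) + 1) * ((z ! : ℚ)) ^ 2 * ((n - 2 * z) ! : ℚ)) :=
  stmt_8_general n hodd
end

section
/- For every fixed integer S ≥ 1, the sequence I ↦ P(I,S) (viewed as a sequence of real numbers) converges to 1 as I → ∞. -/
lemma P_le_one : ∀ I S : ℕ, P I S ≤ 1
  | 0, _ => by simp [P]
  | _ + 1, 0 => by simp [P]
  | I + 1, S + 1 => by
    have h1 := P_le_one I S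
    have h2 := P_le_one (I - 1) (S + 1)
    have hn : (0:ℚ) < (I:ℚ) + S + 1 := by positivity
    rw [P]
    have step : 1 / ((I : ℚ) + S + 1) + ((S : ℚ) / ((I : ℚ) + S + 1)) * P I S +
        ((I : ℚ) / ((I : ℚ) + S + 1)) * P (I - 1) (S + 1)
        ≤ 1 / ((I : ℚ) + S + 1) + ((S : ℚ) / ((I : ℚ) + S + 1)) * 1 +
        ((I : ℚ) / ((I : ℚ) + S + 1)) * 1 := by
      gcongr
    calc _ ≤ _ := step
      _ = 1 := by field_simp; ring
  termination_by I _ => I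

lemma aux_ineq (i s : ℝ) (hi : 0 ≤ i) (hs : 0 ≤ s) (hpos : 0 < i + s) :
    s/(i+s+1) * Real.sqrt (s/(i+s)) + i/(i+s+1) * Real.sqrt ((s+1)/(i+s))
      ≤ Real.sqrt ((s+1)/(i+s+2)) := by
  have hn : (0:ℝ) < i + s + 1 := by linarith
  have h1 : Real.sqrt (s/(i+s)) ≤ Real.sqrt ((s+1)/(i+s)) :=
    Real.sqrt_le_sqrt (by gcongr; linarith)
  have key : (i+s)/(i+s+1) * Real.sqrt ((s+1)/(i+s)) ≤ Real.sqrt ((s+1)/(i+s+2)) := by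
    rw [← Real.sqrt_sq (by positivity : (0:ℝ) ≤ (i+s)/(i+s+1)), ← Real.sqrt_mul (by positivity)]
    apply Real.sqrt_le_sqrt
    rw [div_pow, div_mul_div_comm, div_le_div_iff₀ (by positivity) (by positivity)]
    nlinarith [sq_nonneg (i+s), hpos, hn]
  calc s/(i+s+1) * Real.sqrt (s/(i+s)) + i/(i+s+1) * Real.sqrt ((s+1)/(i+s))
      ≤ s/(i+s+1) * Real.sqrt ((s+1)/(i+s)) + i/(i+s+1) * Real.sqrt ((s+1)/(i+s)) := by
        gcongr
    _ = (i+s)/(i+s+1) * Real.sqrt ((s+1)/(i+s)) := by ring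
    _ ≤ _ := key

lemma Q_bound : ∀ I S : ℕ, 1 ≤ S → 1 - ((P I S : ℚ) : ℝ) ≤ Real.sqrt ((S:ℝ) / (I + S))
  | 0, S, hS => by
    have hS' : (0:ℝ) < S := by exact_mod_cast hS
    have h : ((S:ℝ)) / (((0:ℕ):ℝ) + S) = 1 := by
      push_cast; rw [zero_add, div_self (ne_of_gt hS')]
    rw [h]
    simp [P]
  | I + 1, 0, hS => by omega
  | I + 1, S + 1, _ => by
    have hgoal : ((((S+1:ℕ)):ℝ)) / ((((I+1:ℕ)):ℝ) + (((S+1:ℕ)):ℝ))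
        = ((S:ℝ)+1)/((I:ℝ)+(S:ℝ)+2) := by push_cast; ring_nf
    rw [hgoal]
    set i : ℝ := (I:ℝ) with hi
    set s : ℝ := (S:ℝ) with hs
    have hn : (0:ℝ) < i + s + 1 := by positivity
    have hrec : 1 - ((P (I+1) (S+1) : ℚ) : ℝ)
        = s/(i+s+1) * (1 - ((P I S : ℚ) : ℝ))
          + i/(i+s+1) * (1 - ((P (I-1) (S+1) : ℚ) : ℝ)) := by
      rw [P]
      push_cast
      field_simp
      ring
    rw [hrec]
    rcases Nat.eq_zero_or_pos (I + S) with hzero | hpos'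
    · have hI0 : I = 0 := by omega
      have hS0 : S = 0 := by omega
      subst hI0; subst hS0
      simp only [hi, hs]
      norm_num [P]
    · have hpos : (0:ℝ) < i + s := by
        have h : (0:ℝ) < ((I + S : ℕ) : ℝ) := by exact_mod_cast hpos'
        push_cast at h; exact h
      have hT1 : s/(i+s+1) * (1 - ((P I S : ℚ) : ℝ)) ≤ s/(i+s+1) * Real.sqrt (s/(i+s)) := by
        rcases Nat.eq_zero_or_pos S with h0 | h1
        · subst h0; simp [hs]
        · have hb := Q_bound I S h1
          exact mul_le_mul_of_nonneg_left hb (by positivity)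
      have hT2 : i/(i+s+1) * (1 - ((P (I-1) (S+1) : ℚ) : ℝ))
          ≤ i/(i+s+1) * Real.sqrt ((s+1)/(i+s)) := by
        rcases Nat.eq_zero_or_pos I with h0 | h1
        · subst h0; simp [hi]
        · have hb := Q_bound (I-1) (S+1) (by omega)
          have e1 : ((I-1:ℕ):ℝ) + ((S+1:ℕ):ℝ) = i + s := by
            rw [Nat.cast_sub h1]; push_cast; ring
          have e2 : (((S+1:ℕ)):ℝ) = s + 1 := by push_cast; ring
          rw [e1, e2] at hb
          exact mul_le_mul_of_nonneg_left hb (by positivity)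
      have hfin := aux_ineq i s (by positivity) (by positivity) hpos
      have hrw : (s+1)/(i+s+2) = (s+1)/(i+s+2) := rfl
      calc s/(i+s+1) * (1 - ((P I S : ℚ) : ℝ)) + i/(i+s+1) * (1 - ((P (I-1) (S+1) : ℚ) : ℝ))
          ≤ s/(i+s+1) * Real.sqrt (s/(i+s)) + i/(i+s+1) * Real.sqrt ((s+1)/(i+s)) :=
            add_le_add hT1 hT2
        _ ≤ Real.sqrt ((s+1)/(i+s+2)) := hfin
  termination_by I _ _ => I

/-- For fixed `S ≥ 1`, the infection probability tends to `1` as `I → ∞`. -/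
theorem stmt_11 (S : ℕ) (hS : 1 ≤ S) :
    Filter.Tendsto (fun I : ℕ => ((P I S : ℚ) : ℝ)) Filter.atTop (nhds 1) := by
  have hlow : ∀ I : ℕ, 1 - Real.sqrt ((S:ℝ)/(I+S)) ≤ ((P I S : ℚ):ℝ) := fun I => by
    linarith [Q_bound I S hS]
  have hup : ∀ I : ℕ, ((P I S:ℚ):ℝ) ≤ 1 := fun I => by exact_mod_cast P_le_one I S
  have h0 : Filter.Tendsto (fun I : ℕ => (S:ℝ)/(I+S)) Filter.atTop (nhds 0) := by
    apply Filter.Tendsto.div_atTop (tendsto_const_nhds)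
    apply Filter.tendsto_atTop_add_const_right
    exact tendsto_natCast_atTop_atTop
  have hsq : Filter.Tendsto (fun I : ℕ => Real.sqrt ((S:ℝ)/(I+S))) Filter.atTop (nhds 0) := by
    have h := (Real.continuous_sqrt.tendsto 0).comp h0
    simpa only [Function.comp_def, Real.sqrt_zero] using h
  have hlow' : Filter.Tendsto (fun I : ℕ => 1 - Real.sqrt ((S:ℝ)/(I+S))) Filter.atTop (nhds 1) := by
    simpa using tendsto_const_nhds.sub hsq
  exact tendsto_of_tendsto_of_tendsto_of_le_of_le hlow' tendsto_const_nhds hlow hup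
end

section
/- For every fixed integer I ≥ 1, the sequence S ↦ P(I,S) (viewed as a sequence of real numbers) converges to 0 as S → ∞. -/
/-! The quantity `S * P I S` stays below `I`: feeding this bound into the recursion, the three
terms contribute at most `(S + 1) + (S + 1) I + I ^ 2 ≤ (I + 1) (I + S + 1)` over the common
denominator `I + S + 1`. Hence `0 ≤ P I S ≤ I / S`, which squeezes `P I S` to `0`. -/

theorem P_nonneg (I S : ℕ) : 0 ≤ P I S := by
  fun_induction P I S with
  | case1 | case2 => exact le_rfl
  | case3 I S ih₁ ih₂ => positivity

theorem P_mul_le (I S : ℕ) : P I S * S ≤ I := by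
  fun_induction P I S with
  | case1 | case2 => simp [add_nonneg]
  | case3 I S ih₁ ih₂ =>
    set a := P I S
    set b := P (I - 1) (S + 1)
    have hN : (0 : ℚ) < I + S + 1 := by positivity
    have hb : b * (S + 1) ≤ I := by
      push_cast at ih₂
      exact ih₂.trans (mod_cast Nat.sub_le I 1)
    have hI : (0 : ℚ) ≤ I := by positivity
    calc (1 / (I + S + 1) + S / (I + S + 1) * a + I / (I + S + 1) * b) * ↑(S + 1)
        = ((S + 1) + (S + 1) * (a * S) + I * (b * (S + 1))) / (I + S + 1) := by
          push_cast; field_simp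
      _ ≤ ((S + 1) + (S + 1) * I + I * I) / (I + S + 1) := by gcongr
      _ ≤ ↑(I + 1) := by
          rw [div_le_iff₀ hN]; push_cast; nlinarith

theorem P_le_div (I S : ℕ) : P I S ≤ I / S := by
  rcases S.eq_zero_or_pos with rfl | hS
  · cases I <;> simp [P] -- both sides are `0`, the right one since `I / 0 = 0` in `ℚ`
  · rw [le_div_iff₀ (by positivity)]
    exact P_mul_le I S

theorem stmt_12_general (I : ℕ) :
    Filter.Tendsto (fun S : ℕ => ((P I S : ℚ) : ℝ)) Filter.atTop (nhds 0) := by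
  refine tendsto_of_tendsto_of_tendsto_of_le_of_le tendsto_const_nhds
    (tendsto_const_div_atTop_nhds_zero_nat (I : ℝ)) (fun S => ?_) (fun S => ?_)
  · exact Rat.cast_nonneg.mpr (P_nonneg I S)
  · exact (Rat.cast_le.mpr (P_le_div I S)).trans_eq (by push_cast; rfl)

/-- For fixed `I ≥ 1`, the infection probability tends to `0` as `S → ∞`. -/
theorem stmt_12 (I : ℕ) (hI : 1 ≤ I) :
    Filter.Tendsto (fun S : ℕ => ((P I S : ℚ) : ℝ)) Filter.atTop (nhds 0) :=
  stmt_12_general I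
end

section
/- The diagonal sequence n ↦ P(n,n) (viewed as a sequence of real numbers) converges to 1/2 as n → ∞. -/
/-! While there are at least as many clean as infected mobiles, the recursion stays in that region
and never reaches the boundary `S = 0`, so it is solved there by `I / (I + S - 1)`. On the
diagonal this is `n / (2n - 1) → 1/2`. -/

theorem P_eq_div_of_le : ∀ {I S : ℕ}, I ≤ S → P I S = I / (I + S - 1)
  | 0, _, _ => by simp [P]
  | 1, S + 1, _ => by simp [P]
  | J + 2, S + 1, h => by
    rw [P, Nat.add_sub_cancel, P_eq_div_of_le (I := J + 1) (S := S) (by omega),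
      P_eq_div_of_le (I := J) (S := S + 1) (by omega)]
    have hJS : (J : ℚ) + S ≠ 0 := by norm_cast; omega
    push_cast
    rw [show (J : ℚ) + 1 + S - 1 = J + S by ring, show (J : ℚ) + (S + 1) - 1 = J + S by ring,
      show (J : ℚ) + 2 + (S + 1) - 1 = J + 1 + S + 1 by ring]
    field_simp
    ring

theorem P_self (n : ℕ) : P n n = n / (2 * n - 1) := by
  rw [P_eq_div_of_le le_rfl, two_mul]

/-- The diagonal infection probability tends to `1/2` as `n → ∞`. -/
theorem stmt_13 :
    Filter.Tendsto (fun n : ℕ => ((P n n : ℚ) : ℝ)) Filter.atTop (nhds (1 / 2)) := by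
  have h := (tendsto_natCast_div_add_atTop (-1 / 2 : ℝ)).const_mul (1 / 2)
  rw [mul_one] at h
  refine h.congr fun n => ?_
  rw [P_self]
  push_cast
  rw [show (n : ℝ) + -1 / 2 = (2 * n - 1) / 2 by ring, div_div_eq_mul_div]
  ring
end
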